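/- Let L be a monolithic strongly solvable Leibniz A-algebra. Then every maximal nilpotent subalgebra U of L satisfies: either U = L², or U is a Cartan subalgebra of L (equivalently, a subalgebra complementary to L², i.e. L = L² ∔ U). -/

import Mathlib

/-- A (right) Leibniz algebra structure on an `F`-vector space `L`:
a bilinear bracket satisfying `[x,[y,z]] = [[x,y],z] - [[x,z],y]`. -/
structure LeibnizAlg (F : Type*) (L : Type*) [Field F] [AddCommGroup L] [Module F L] where
  bracket : L →ₗ[F] L →ₗ[F] L
  leibniz : ∀ x y z : L,
    bracket x (bracket y z) = bracket (bracket x y) z - bracket (bracket x z) y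

namespace LeibnizAlg

variable {F : Type*} {L : Type*} [Field F] [AddCommGroup L] [Module F L]

/-- The product `[M, N]` of two subspaces: the span of all brackets `[m, n]`. -/
def prod (A : LeibnizAlg F L) (M N : Submodule F L) : Submodule F L :=
  Submodule.span F {z : L | ∃ m ∈ M, ∃ n ∈ N, z = A.bracket m n}

/-- A subalgebra: a subspace closed under the product. -/
def IsSubalgebra (A : LeibnizAlg F L) (S : Submodule F L) : Prop :=
  A.prod S S ≤ S

/-- A (two-sided) ideal: `[I, L] ⊆ I` and `[L, I] ⊆ I`. -/
def IsIdeal (A : LeibnizAlg F L) (I : Submodule F L) : Prop :=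
  A.prod I ⊤ ≤ I ∧ A.prod ⊤ I ≤ I

/-- Lower central series of a subspace `U`: `lcs U 0 = U = U¹`,
`lcs U k = U^(k+1)`, i.e. `lcs U (k+1) = [lcs U k, U]`. -/
def lcs (A : LeibnizAlg F L) (U : Submodule F L) : ℕ → Submodule F L
  | 0 => U
  | k + 1 => A.prod (lcs A U k) U

/-- `U` is nilpotent: `U^(n+1) = 0` for some `n`. -/
def IsNilpotentSub (A : LeibnizAlg F L) (U : Submodule F L) : Prop :=
  ∃ n : ℕ, A.lcs U n = ⊥

/-- `U` is abelian: `[U, U] = 0`. -/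
def IsAbelian (A : LeibnizAlg F L) (U : Submodule F L) : Prop :=
  A.prod U U = ⊥

/-- An `A`-algebra: every nilpotent subalgebra is abelian. -/
def IsAAlgebra (A : LeibnizAlg F L) : Prop :=
  ∀ U : Submodule F L, A.IsSubalgebra U → A.IsNilpotentSub U → A.IsAbelian U

/-- Derived series: `derSeries 0 = L`, `derSeries (k+1) = [derSeries k, derSeries k]`. -/
def derSeries (A : LeibnizAlg F L) : ℕ → Submodule F L
  | 0 => ⊤
  | k + 1 => A.prod (derSeries A k) (derSeries A k)

/-- `L` is solvable: some term of the derived series vanishes. -/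
def IsSolvable (A : LeibnizAlg F L) : Prop :=
  ∃ n : ℕ, A.derSeries n = ⊥

/-- The centralizer `Z_L(U)` of a subspace `U`. -/
def centralizer (A : LeibnizAlg F L) (U : Submodule F L) : Submodule F L where
  carrier := {x : L | ∀ u ∈ U, A.bracket x u = 0 ∧ A.bracket u x = 0}
  add_mem' := by
    intro a b ha hb u hu
    refine ⟨?_, ?_⟩
    · rw [map_add, LinearMap.add_apply, (ha u hu).1, (hb u hu).1, add_zero]
    · rw [map_add, (ha u hu).2, (hb u hu).2, add_zero]
  zero_mem' := by
    intro u hu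
    refine ⟨?_, ?_⟩
    · rw [map_zero, LinearMap.zero_apply]
    · rw [map_zero]
  smul_mem' := by
    intro c a ha u hu
    refine ⟨?_, ?_⟩
    · rw [map_smul, LinearMap.smul_apply, (ha u hu).1, smul_zero]
    · rw [map_smul, (ha u hu).2, smul_zero]

/-- The centre of the subalgebra `M`: elements of `M` centralizing `M`. -/
def centerOf (A : LeibnizAlg F L) (M : Submodule F L) : Submodule F L :=
  M ⊓ A.centralizer M

/-- `N` is the nilradical: the largest nilpotent ideal. -/
def IsNilradical (A : LeibnizAlg F L) (N : Submodule F L) : Prop :=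
  A.IsIdeal N ∧ A.IsNilpotentSub N ∧
    ∀ I : Submodule F L, A.IsIdeal I → A.IsNilpotentSub I → I ≤ N

/-- A minimal ideal: a nonzero ideal containing no ideal other than `0` and itself. -/
def IsMinimalIdeal (A : LeibnizAlg F L) (I : Submodule F L) : Prop :=
  A.IsIdeal I ∧ I ≠ ⊥ ∧ ∀ J : Submodule F L, A.IsIdeal J → J ≤ I → J = ⊥ ∨ J = I

/-- A maximal subalgebra. -/
def IsMaximalSubalgebra (A : LeibnizAlg F L) (M : Submodule F L) : Prop :=
  A.IsSubalgebra M ∧ M ≠ ⊤ ∧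
    ∀ S : Submodule F L, A.IsSubalgebra S → M ≤ S → S = M ∨ S = ⊤

/-- `L` is φ-free: every ideal contained in all maximal subalgebras is zero. -/
def IsPhiFree (A : LeibnizAlg F L) : Prop :=
  ∀ I : Submodule F L, A.IsIdeal I →
    (∀ M : Submodule F L, A.IsMaximalSubalgebra M → I ≤ M) → I = ⊥

/-- `Asoc L`: the sum of the abelian minimal ideals. -/
def asoc (A : LeibnizAlg F L) : Submodule F L :=
  sSup {I : Submodule F L | A.IsMinimalIdeal I ∧ A.IsAbelian I}

/-- A Cartan subalgebra: a nilpotent, self-normalizing subalgebra. -/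
def IsCartan (A : LeibnizAlg F L) (C : Submodule F L) : Prop :=
  A.IsSubalgebra C ∧ A.IsNilpotentSub C ∧
    ∀ x : L, (∀ c ∈ C, A.bracket x c ∈ C ∧ A.bracket c x ∈ C) → x ∈ C

/-- A maximal nilpotent subalgebra. -/
def IsMaxNilpotentSubalgebra (A : LeibnizAlg F L) (U : Submodule F L) : Prop :=
  A.IsSubalgebra U ∧ A.IsNilpotentSub U ∧
    ∀ V : Submodule F L, A.IsSubalgebra V → A.IsNilpotentSub V → U ≤ V → V = U

end LeibnizAlg

/-!
`L² = [L, L]` and every maximal nilpotent subalgebra `U` are abelian, since `L` is an A-algebra.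
Write `R_x = [·, x]`. On the abelian ideal `L²` the maps `R_x` commute with left and right
multiplications, so the Fitting components `L² ∩ ker R_xⁿ` and `R_xⁿ(L²)` are ideals; they
are disjoint, so by monolithicity one vanishes. Hence either `R_x` is injective on `L²`, or it is
nilpotent there, in which case `L² + Fx` is a nilpotent, hence abelian, subalgebra and `x`
centralizes `L²`.

If some `x ∈ U` acts injectively on `L²`, then `ker R_x` is an abelian subalgebra containing
`U`, so it is `U`, and `R_x` maps `L²` onto itself, whence `L = L² ∔ U` and `U` is Cartan.
Otherwise `U` centralizes `L²`, so `U + L²` is abelian and `L² ≤ U`. As `L` is not nilpotent,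
some `x` acts injectively on `L²`; then the centre of `L` meets `L²` trivially and so is zero,
and writing `z ∈ U` as `b + k` with `b ∈ L²`, `k ∈ ker R_x` makes `k` central, so `U = L²`.
-/

theorem LinearMap.sup_ker_eq_top_of_range_le {K V : Type*} [DivisionRing K] [AddCommGroup V]
    [Module K V] [FiniteDimensional K V] {f : V →ₗ[K] V} {B : Submodule K V}
    (hf : LinearMap.range f ≤ B) (hB : B ⊓ LinearMap.ker f = ⊥) :
    B ⊔ LinearMap.ker f = ⊤ := by
  refine Submodule.eq_top_of_finrank_eq (le_antisymm (Submodule.finrank_le _) ?_)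
  have hsum := Submodule.finrank_sup_add_finrank_inf_eq B (LinearMap.ker f)
  rw [hB, finrank_bot, add_zero] at hsum
  rw [hsum, ← f.finrank_range_add_finrank_ker]
  exact Nat.add_le_add_right (Submodule.finrank_mono hf) _

namespace LeibnizAlg

variable {F L : Type*} [Field F] [AddCommGroup L] [Module F L]

section Products

variable (A : LeibnizAlg F L)

lemma bracket_mem_prod {M N : Submodule F L} {m n : L} (hm : m ∈ M) (hn : n ∈ N) :
    A.bracket m n ∈ A.prod M N :=
  Submodule.subset_span ⟨m, hm, n, hn, rfl⟩

lemma prod_le_iff {M N P : Submodule F L} :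
    A.prod M N ≤ P ↔ ∀ m ∈ M, ∀ n ∈ N, A.bracket m n ∈ P := by
  refine ⟨fun h m hm n hn => h (A.bracket_mem_prod hm hn), fun h => Submodule.span_le.mpr ?_⟩
  rintro _ ⟨m, hm, n, hn, rfl⟩
  exact h m hm n hn

lemma bracket_mem_derSeries_one (x y : L) : A.bracket x y ∈ A.derSeries 1 :=
  A.bracket_mem_prod Submodule.mem_top Submodule.mem_top

lemma isSubalgebra_of_derSeries_one_le {S : Submodule F L} (h : A.derSeries 1 ≤ S) :
    A.IsSubalgebra S :=
  A.prod_le_iff.mpr fun m _ n _ => h (A.bracket_mem_derSeries_one m n)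

lemma isIdeal_of_derSeries_one_le {S : Submodule F L} (h : A.derSeries 1 ≤ S) :
    A.IsIdeal S :=
  ⟨A.prod_le_iff.mpr fun m _ n _ => h (A.bracket_mem_derSeries_one m n),
    A.prod_le_iff.mpr fun m _ n _ => h (A.bracket_mem_derSeries_one m n)⟩

lemma isIdeal_centralizer_top : A.IsIdeal (A.centralizer ⊤) :=
  ⟨A.prod_le_iff.mpr fun z hz y _ => by simp [(hz y trivial).1],
    A.prod_le_iff.mpr fun y _ z hz => by simp [(hz y trivial).2]⟩

end Products

section Abelian

variable {A : LeibnizAlg F L} {U V : Submodule F L}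

lemma IsAbelian.bracket_eq_zero (hU : A.IsAbelian U) {u v : L} (hu : u ∈ U) (hv : v ∈ U) :
    A.bracket u v = 0 := by
  have h : A.bracket u v ∈ A.prod U U := A.bracket_mem_prod hu hv
  rwa [show A.prod U U = ⊥ from hU, Submodule.mem_bot] at h

lemma isAbelian_of_forall (h : ∀ u ∈ U, ∀ v ∈ U, A.bracket u v = 0) : A.IsAbelian U :=
  eq_bot_iff.mpr <| A.prod_le_iff.mpr fun u hu v hv => by simp [h u hu v hv]

lemma IsAbelian.isNilpotentSub (hU : A.IsAbelian U) : A.IsNilpotentSub U := ⟨1, hU⟩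

lemma IsAbelian.le_centralizer (hU : A.IsAbelian U) : U ≤ A.centralizer U :=
  fun _ hu _ hv => ⟨hU.bracket_eq_zero hu hv, hU.bracket_eq_zero hv hu⟩

lemma IsAbelian.sup (hU : A.IsAbelian U) (hV : A.IsAbelian V) (hUV : U ≤ A.centralizer V) :
    A.IsAbelian (U ⊔ V) := by
  refine isAbelian_of_forall fun s hs t ht => ?_
  obtain ⟨u, hu, v, hv, rfl⟩ := Submodule.mem_sup.mp hs
  obtain ⟨u', hu', v', hv', rfl⟩ := Submodule.mem_sup.mp ht
  simp [hU.bracket_eq_zero hu hu', hV.bracket_eq_zero hv hv', (hUV hu v' hv').1,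
    (hUV hu' v hv).2]

lemma IsAAlgebra.isAbelian_derSeries_one (hA : A.IsAAlgebra)
    (hss : A.IsNilpotentSub (A.derSeries 1)) : A.IsAbelian (A.derSeries 1) :=
  hA _ (A.isSubalgebra_of_derSeries_one_le le_rfl) hss

end Abelian

section Monolith

variable (A : LeibnizAlg F L)

def IsMonolith (W : Submodule F L) : Prop :=
  W ≠ ⊥ ∧ ∀ I : Submodule F L, A.IsIdeal I → I ≠ ⊥ → W ≤ I

variable {A}

lemma exists_isMinimalIdeal_le [FiniteDimensional F L] {I : Submodule F L} (hI : A.IsIdeal I)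
    (hI0 : I ≠ ⊥) : ∃ J, A.IsMinimalIdeal J ∧ J ≤ I := by
  induction I using WellFoundedLT.induction with
  | _ I ih =>
    by_cases hmin : ∀ J, A.IsIdeal J → J ≤ I → J = ⊥ ∨ J = I
    · exact ⟨I, ⟨hI, hI0, hmin⟩, le_rfl⟩
    · push Not at hmin
      obtain ⟨J, hJ, hJI, hJ0, hJI'⟩ := hmin
      obtain ⟨K, hK, hKJ⟩ := ih J (lt_of_le_of_ne hJI hJI') hJ hJ0
      exact ⟨K, hK, hKJ.trans hJI⟩

lemma IsMinimalIdeal.isMonolith [FiniteDimensional F L] {W : Submodule F L}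
    (hW : A.IsMinimalIdeal W) (hmono : ∀ I, A.IsMinimalIdeal I → I = W) : A.IsMonolith W := by
  refine ⟨hW.2.1, fun I hI hI0 => ?_⟩
  obtain ⟨J, hJ, hJI⟩ := exists_isMinimalIdeal_le hI hI0
  exact hmono J hJ ▸ hJI

lemma IsMonolith.eq_bot_or_eq_bot_of_disjoint {W I J : Submodule F L} (hW : A.IsMonolith W)
    (hI : A.IsIdeal I) (hJ : A.IsIdeal J) (hIJ : Disjoint I J) : I = ⊥ ∨ J = ⊥ := by
  by_contra! h
  exact hW.1 (le_bot_iff.mp (hIJ (hW.2 I hI h.1) (hW.2 J hJ h.2)))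

end Monolith

section RightMul

variable (A : LeibnizAlg F L)

def rightMul (x : L) : Module.End F L := A.bracket.flip x

@[simp]
lemma rightMul_apply (x y : L) : A.rightMul x y = A.bracket y x := rfl

lemma range_rightMul_le (x : L) : LinearMap.range (A.rightMul x) ≤ A.derSeries 1 := by
  rintro _ ⟨y, rfl⟩
  exact A.bracket_mem_derSeries_one y x

lemma rightMul_pow_mem_derSeries_one (x : L) (k : ℕ) {b : L} (hb : b ∈ A.derSeries 1) :
    (A.rightMul x ^ k) b ∈ A.derSeries 1 := by
  cases k with
  | zero => exact hb
  | succ k => rw [pow_succ', Module.End.mul_apply]; exact A.range_rightMul_le x ⟨_, rfl⟩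

lemma isSubalgebra_ker_rightMul (x : L) : A.IsSubalgebra (LinearMap.ker (A.rightMul x)) := by
  refine A.prod_le_iff.mpr fun m hm n hn => ?_
  simp only [LinearMap.mem_ker, rightMul_apply] at hm hn ⊢
  simpa [hm, hn, eq_comm] using A.leibniz m n x

variable {A}

lemma eq_zero_of_bracket_eq_zero {x b : L}
    (h : A.derSeries 1 ⊓ LinearMap.ker (A.rightMul x) = ⊥) (hb : b ∈ A.derSeries 1)
    (hbx : A.bracket b x = 0) : b = 0 := by
  have hmem : b ∈ A.derSeries 1 ⊓ LinearMap.ker (A.rightMul x) := ⟨hb, hbx⟩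
  rwa [h, Submodule.mem_bot] at hmem

lemma isAbelian_ker_rightMul {x : L} (h : A.derSeries 1 ⊓ LinearMap.ker (A.rightMul x) = ⊥) :
    A.IsAbelian (LinearMap.ker (A.rightMul x)) :=
  isAbelian_of_forall fun m hm n hn => eq_zero_of_bracket_eq_zero h
    (A.bracket_mem_derSeries_one m n) (A.isSubalgebra_ker_rightMul x (A.bracket_mem_prod hm hn))

lemma derSeries_one_sup_ker_rightMul [FiniteDimensional F L] {x : L}
    (h : A.derSeries 1 ⊓ LinearMap.ker (A.rightMul x) = ⊥) :
    A.derSeries 1 ⊔ LinearMap.ker (A.rightMul x) = ⊤ :=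
  LinearMap.sup_ker_eq_top_of_range_le (A.range_rightMul_le x) h

lemma mem_centralizer_top_of_mem_centralizer {x z : L} (hz : z ∈ A.centralizer (A.derSeries 1))
    (hzx : A.bracket z x = 0) (h : A.derSeries 1 ⊓ LinearMap.ker (A.rightMul x) = ⊥) :
    z ∈ A.centralizer ⊤ := by
  intro y _
  constructor
  · refine eq_zero_of_bracket_eq_zero h (A.bracket_mem_derSeries_one z y) ?_
    have := A.leibniz z y x
    rw [(hz _ (A.bracket_mem_derSeries_one y x)).1, hzx] at this
    simpa [eq_comm] using this
  · refine eq_zero_of_bracket_eq_zero h (A.bracket_mem_derSeries_one y z) ?_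
    have := A.leibniz y z x
    rw [hzx, (hz _ (A.bracket_mem_derSeries_one y x)).2] at this
    simpa [eq_comm] using this

end RightMul

section AbelianDerivedAlgebra

variable {A : LeibnizAlg F L}

lemma rightMul_bracket_right (hB : A.IsAbelian (A.derSeries 1)) {b : L}
    (hb : b ∈ A.derSeries 1) (x y : L) :
    A.rightMul x (A.bracket b y) = A.bracket (A.rightMul x b) y := by
  have := A.leibniz b y x
  rw [hB.bracket_eq_zero hb (A.bracket_mem_derSeries_one y x)] at this
  simpa using sub_eq_zero.mp this.symm

lemma rightMul_bracket_left (hB : A.IsAbelian (A.derSeries 1)) {b : L}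
    (hb : b ∈ A.derSeries 1) (x y : L) :
    A.rightMul x (A.bracket y b) = A.bracket y (A.rightMul x b) := by
  have := A.leibniz y b x
  rw [hB.bracket_eq_zero (A.bracket_mem_derSeries_one y x) hb, sub_zero] at this
  simpa using this.symm

lemma rightMul_pow_bracket_right (hB : A.IsAbelian (A.derSeries 1)) {b : L}
    (hb : b ∈ A.derSeries 1) (x y : L) (k : ℕ) :
    (A.rightMul x ^ k) (A.bracket b y) = A.bracket ((A.rightMul x ^ k) b) y := by
  induction k with
  | zero => rfl
  | succ k ih =>
    rw [pow_succ', Module.End.mul_apply, Module.End.mul_apply, ih,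
      rightMul_bracket_right hB (A.rightMul_pow_mem_derSeries_one x k hb)]

lemma rightMul_pow_bracket_left (hB : A.IsAbelian (A.derSeries 1)) {b : L}
    (hb : b ∈ A.derSeries 1) (x y : L) (k : ℕ) :
    (A.rightMul x ^ k) (A.bracket y b) = A.bracket y ((A.rightMul x ^ k) b) := by
  induction k with
  | zero => rfl
  | succ k ih =>
    rw [pow_succ', Module.End.mul_apply, Module.End.mul_apply, ih,
      rightMul_bracket_left hB (A.rightMul_pow_mem_derSeries_one x k hb)]

lemma isIdeal_inf_ker_rightMul_pow (hB : A.IsAbelian (A.derSeries 1)) (x : L) (k : ℕ) :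
    A.IsIdeal (A.derSeries 1 ⊓ LinearMap.ker (A.rightMul x ^ k)) := by
  constructor
  · refine A.prod_le_iff.mpr fun m ⟨hmB, hmk⟩ y _ => ⟨A.bracket_mem_derSeries_one m y, ?_⟩
    simp_all [LinearMap.mem_ker, rightMul_pow_bracket_right hB hmB]
  · refine A.prod_le_iff.mpr fun y _ m ⟨hmB, hmk⟩ => ⟨A.bracket_mem_derSeries_one y m, ?_⟩
    simp_all [LinearMap.mem_ker, rightMul_pow_bracket_left hB hmB]

lemma isIdeal_map_rightMul_pow (hB : A.IsAbelian (A.derSeries 1)) (x : L) (k : ℕ) :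
    A.IsIdeal ((A.derSeries 1).map (A.rightMul x ^ k)) := by
  constructor
  · refine A.prod_le_iff.mpr ?_
    rintro _ ⟨b, hb, rfl⟩ y -
    exact ⟨_, A.bracket_mem_derSeries_one b y, rightMul_pow_bracket_right hB hb x y k⟩
  · refine A.prod_le_iff.mpr ?_
    rintro y - _ ⟨b, hb, rfl⟩
    exact ⟨_, A.bracket_mem_derSeries_one y b, rightMul_pow_bracket_left hB hb x y k⟩

lemma lcs_derSeries_one_sup_span_le (hB : A.IsAbelian (A.derSeries 1)) (x : L) (k : ℕ) :
    A.lcs (A.derSeries 1 ⊔ Submodule.span F {x}) (k + 1)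
      ≤ (A.derSeries 1).map (A.rightMul x ^ k) := by
  induction k with
  | zero =>
    rw [pow_zero, Module.End.one_eq_id, Submodule.map_id]
    exact A.prod_le_iff.mpr fun m _ n _ => A.bracket_mem_derSeries_one m n
  | succ k ih =>
    refine A.prod_le_iff.mpr fun m hm t ht => ?_
    obtain ⟨b, hb, rfl⟩ := ih hm
    obtain ⟨b', hb', s, hs, rfl⟩ := Submodule.mem_sup.mp ht
    obtain ⟨c, rfl⟩ := Submodule.mem_span_singleton.mp hs
    refine ⟨c • b, Submodule.smul_mem _ c hb, ?_⟩
    rw [map_add, hB.bracket_eq_zero (A.rightMul_pow_mem_derSeries_one x k hb) hb', zero_add,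
      map_smul, map_smul, pow_succ', Module.End.mul_apply, rightMul_apply]

lemma IsAAlgebra.mem_centralizer_of_map_rightMul_pow_eq_bot (hA : A.IsAAlgebra)
    (hB : A.IsAbelian (A.derSeries 1)) {x : L} {k : ℕ}
    (hk : (A.derSeries 1).map (A.rightMul x ^ k) = ⊥) : x ∈ A.centralizer (A.derSeries 1) := by
  have hT : A.IsAbelian (A.derSeries 1 ⊔ Submodule.span F {x}) :=
    hA _ (A.isSubalgebra_of_derSeries_one_le le_sup_left)
      ⟨k + 1, le_bot_iff.mp (hk ▸ lcs_derSeries_one_sup_span_le hB x k)⟩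
  have hx : x ∈ A.derSeries 1 ⊔ Submodule.span F {x} :=
    Submodule.mem_sup_right (Submodule.mem_span_singleton_self x)
  exact fun b hb => ⟨hT.bracket_eq_zero hx (Submodule.mem_sup_left hb),
    hT.bracket_eq_zero (Submodule.mem_sup_left hb) hx⟩

/-- Fitting's lemma for `R_x` on `L²`; monolithicity forces one component to vanish. -/
lemma IsMonolith.mem_centralizer_or_inf_ker_rightMul_eq_bot [FiniteDimensional F L]
    {W : Submodule F L} (hW : A.IsMonolith W) (hA : A.IsAAlgebra)
    (hB : A.IsAbelian (A.derSeries 1)) (x : L) :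
    x ∈ A.centralizer (A.derSeries 1) ∨
      A.derSeries 1 ⊓ LinearMap.ker (A.rightMul x) = ⊥ := by
  obtain ⟨n, hdisj, hn⟩ := ((A.rightMul x).eventually_disjoint_ker_pow_range_pow.and
    (Filter.eventually_ge_atTop 1)).exists
  rcases hW.eq_bot_or_eq_bot_of_disjoint (isIdeal_inf_ker_rightMul_pow hB x n)
    (isIdeal_map_rightMul_pow hB x n) (hdisj.mono inf_le_right (LinearMap.map_le_range)) with
    h | h
  · right
    obtain ⟨m, rfl⟩ := Nat.exists_eq_add_of_le' hn
    refine eq_bot_iff.mpr (le_trans (inf_le_inf_left _ ?_) h.le)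
    rw [pow_succ]
    exact LinearMap.ker_le_ker_comp _ _
  · exact Or.inl (hA.mem_centralizer_of_map_rightMul_pow_eq_bot hB h)

lemma IsMonolith.exists_inf_ker_rightMul_eq_bot [FiniteDimensional F L] {W : Submodule F L}
    (hW : A.IsMonolith W) (hA : A.IsAAlgebra) (hB : A.IsAbelian (A.derSeries 1))
    (hB0 : A.derSeries 1 ≠ ⊥) :
    ∃ x, A.derSeries 1 ⊓ LinearMap.ker (A.rightMul x) = ⊥ := by
  by_contra! h
  have hcent : ∀ x, x ∈ A.centralizer (A.derSeries 1) := fun x =>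
    (hW.mem_centralizer_or_inf_ker_rightMul_eq_bot hA hB x).resolve_right (h x)
  have hnil : A.lcs ⊤ 2 = ⊥ :=
    eq_bot_iff.mpr <| A.prod_le_iff.mpr fun m hm y _ => by simp [(hcent y m hm).2]
  exact hB0 (hA ⊤ le_top ⟨2, hnil⟩)

lemma IsMonolith.le_derSeries_one_of_le_centralizer [FiniteDimensional F L]
    {W : Submodule F L} (hW : A.IsMonolith W) (hB : A.IsAbelian (A.derSeries 1))
    (hB0 : A.derSeries 1 ≠ ⊥) {x : L}
    (h : A.derSeries 1 ⊓ LinearMap.ker (A.rightMul x) = ⊥)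
    {U : Submodule F L} (hU : U ≤ A.centralizer (A.derSeries 1)) : U ≤ A.derSeries 1 := by
  have hZ : A.centralizer ⊤ = ⊥ := by
    refine (hW.eq_bot_or_eq_bot_of_disjoint A.isIdeal_centralizer_top
      (A.isIdeal_of_derSeries_one_le le_rfl) ?_).resolve_right hB0
    refine disjoint_iff.mpr (eq_bot_iff.mpr fun z ⟨hz, hzB⟩ => ?_)
    rw [← h]
    exact ⟨hzB, (hz x trivial).1⟩
  intro z hz
  have hzL : z ∈ A.derSeries 1 ⊔ LinearMap.ker (A.rightMul x) := by
    rw [derSeries_one_sup_ker_rightMul h]; trivial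
  obtain ⟨b, hb, k, hk, rfl⟩ := Submodule.mem_sup.mp hzL
  have hkcent : k ∈ A.centralizer (A.derSeries 1) := by
    simpa using Submodule.sub_mem _ (hU hz) (hB.le_centralizer hb)
  have hk0 : k ∈ A.centralizer ⊤ := mem_centralizer_top_of_mem_centralizer hkcent hk h
  rw [hZ, Submodule.mem_bot] at hk0
  simpa [hk0] using hb

end AbelianDerivedAlgebra

section MaxNilpotent

variable {A : LeibnizAlg F L} {U : Submodule F L}

lemma IsMaxNilpotentSubalgebra.eq_ker_rightMul (hU : A.IsMaxNilpotentSubalgebra U)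
    (hUab : A.IsAbelian U) {x : L} (hx : x ∈ U)
    (h : A.derSeries 1 ⊓ LinearMap.ker (A.rightMul x) = ⊥) :
    U = LinearMap.ker (A.rightMul x) :=
  (hU.2.2 _ (A.isSubalgebra_ker_rightMul x) (isAbelian_ker_rightMul h).isNilpotentSub
    fun _ hu => hUab.bracket_eq_zero hu hx).symm

lemma IsMaxNilpotentSubalgebra.isCartan_of_inf_ker_rightMul_eq_bot [FiniteDimensional F L]
    (hU : A.IsMaxNilpotentSubalgebra U) (hUab : A.IsAbelian U) {x : L} (hx : x ∈ U)
    (h : A.derSeries 1 ⊓ LinearMap.ker (A.rightMul x) = ⊥) :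
    A.IsCartan U ∧ A.derSeries 1 ⊓ U = ⊥ ∧ A.derSeries 1 ⊔ U = ⊤ := by
  have hUx := hU.eq_ker_rightMul hUab hx h
  refine ⟨⟨hU.1, hU.2.1, fun y hy => ?_⟩, hUx ▸ h,
    hUx ▸ derSeries_one_sup_ker_rightMul h⟩
  have hyx : A.bracket y x ∈ A.derSeries 1 ⊓ U :=
    ⟨A.bracket_mem_derSeries_one y x, (hy x hx).1⟩
  rw [hUx, h, Submodule.mem_bot] at hyx
  rw [hUx]
  exact hyx

lemma IsMaxNilpotentSubalgebra.derSeries_one_le (hU : A.IsMaxNilpotentSubalgebra U)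
    (hUab : A.IsAbelian U) (hB : A.IsAbelian (A.derSeries 1))
    (hcent : U ≤ A.centralizer (A.derSeries 1)) : A.derSeries 1 ≤ U :=
  le_sup_right.trans (hU.2.2 _ (A.isSubalgebra_of_derSeries_one_le le_sup_right)
    (hUab.sup hB hcent).isNilpotentSub le_sup_left).le

end MaxNilpotent

end LeibnizAlg

/-- Let `L` be a monolithic strongly solvable Leibniz A-algebra.  Then
every maximal nilpotent subalgebra `U` of `L` satisfies: either `U = L²`, or `U` is a
Cartan subalgebra of `L` (equivalently, a subalgebra complementary to `L²`, i.e.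
`L = L² ∔ U`). -/
theorem monolithic_strongly_solvable_max_nilpotent
    {F L : Type*} [Field F] [AddCommGroup L] [Module F L] [FiniteDimensional F L]
    (A : LeibnizAlg F L) (hA : A.IsAAlgebra)
    (hss : A.IsNilpotentSub (A.derSeries 1))
    (W : Submodule F L) (hW : A.IsMinimalIdeal W)
    (hmono : ∀ I : Submodule F L, A.IsMinimalIdeal I → I = W)
    (U : Submodule F L) (hU : A.IsMaxNilpotentSubalgebra U) :
    U = A.derSeries 1 ∨
      (A.IsCartan U ∧ A.derSeries 1 ⊓ U = ⊥ ∧ A.derSeries 1 ⊔ U = ⊤) := by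
  have hB := hA.isAbelian_derSeries_one hss
  have hUab := hA U hU.1 hU.2.1
  have hWmono := hW.isMonolith hmono
  by_cases hinj : ∃ x ∈ U, A.derSeries 1 ⊓ LinearMap.ker (A.rightMul x) = ⊥
  · obtain ⟨x, hx, h⟩ := hinj
    exact Or.inr (hU.isCartan_of_inf_ker_rightMul_eq_bot hUab hx h)
  · push Not at hinj
    have hcent : U ≤ A.centralizer (A.derSeries 1) := fun x hx =>
      (hWmono.mem_centralizer_or_inf_ker_rightMul_eq_bot hA hB x).resolve_right (hinj x hx)
    have hB0 : A.derSeries 1 ≠ ⊥ := fun h0 => hinj 0 U.zero_mem (by rw [h0, bot_inf_eq])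
    obtain ⟨x, hx⟩ := hWmono.exists_inf_ker_rightMul_eq_bot hA hB hB0
    exact Or.inl (le_antisymm (hWmono.le_derSeries_one_of_le_centralizer hB hB0 hx hcent)
      (hU.derSeries_one_le hUab hB hcent))
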